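/- A graph G is γ-1-critical if and only if every minimum dominating set of G is a 2-packing (i.e., any two distinct vertices of the set are at distance greater than 2). -/

import Mathlib

open SimpleGraph

/-- `D` is a dominating set of `G`. -/
def SimpleGraph.IsDomSet {V : Type*} (G : SimpleGraph V) (D : Set V) : Prop :=
  ∀ v ∉ D, ∃ u ∈ D, G.Adj u v

/-- The domination number of `G`. -/
noncomputable def SimpleGraph.domNum {V : Type*} [Fintype V] (G : SimpleGraph V) : ℕ :=
  sInf {k | ∃ D : Finset V, D.card = k ∧ G.IsDomSet ↑D}

/-- The graph obtained from `G` by subdividing each edge in `F` once: each `e ∈ F`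
contributes a new vertex adjacent to the two endpoints of `e`, and the edges of `F`
are removed. -/
def SimpleGraph.subdiv {V : Type*} (G : SimpleGraph V) (F : Finset (Sym2 V)) :
    SimpleGraph (V ⊕ {e : Sym2 V // e ∈ F}) :=
  SimpleGraph.fromRel (fun a b => match a, b with
    | Sum.inl u, Sum.inl v => G.Adj u v ∧ s(u, v) ∉ F
    | Sum.inl u, Sum.inr e => u ∈ (e : Sym2 V)
    | _, _ => False)

/-- `G` is `γ`-`q`-critical: subdividing any `q` edges increases the domination number,
while some set of `q - 1` edges can be subdivided without increasing it. -/
def SimpleGraph.IsQCritical {V : Type*} [Fintype V] (G : SimpleGraph V) (q : ℕ) : Prop :=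
  (∀ F : Finset (Sym2 V), ↑F ⊆ G.edgeSet → F.card = q →
      G.domNum < (G.subdiv F).domNum) ∧
  (∃ F : Finset (Sym2 V), ↑F ⊆ G.edgeSet ∧ F.card = q - 1 ∧
      (G.subdiv F).domNum = G.domNum)

/-!
If two vertices `x, y` of a minimum dominating set `D` are at distance at most 2, let `z` be the
neighbour of `x` on a shortest `x`–`y` path. After subdividing `xz`, the set `D` still dominates:
`x` dominates the new vertex and `y` dominates `z`. So `γ` does not increase.

Conversely, let `D'` dominate the graph obtained by subdividing `uv`, with `|D'| ≤ γ(G)`.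
Sending the new vertex to an endpoint `t` turns `D'` into a dominating set of `G` with at most
`γ(G)` elements. That set is minimum, so it is a 2-packing. Look at how the new vertex and the
endpoints are dominated in the subdivided graph. If the new vertex itself lies in `D'`, also use
a third vertex adjacent to `u` or `v`. In every case two vertices of one of these 2-packings
are at distance at most 2, a contradiction.
-/

namespace SimpleGraph

variable {V : Type*} {G : SimpleGraph V}

def IsTwoPacking (G : SimpleGraph V) (S : Set V) : Prop :=
  S.Pairwise fun x y => 2 < G.dist x y

lemma Reachable.two_lt_dist_iff {u v : V} (h : G.Reachable u v) :
    2 < G.dist u v ↔ u ≠ v ∧ ¬G.Adj u v ∧ G.commonNeighbors u v = ∅ := by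
  rw [← two_lt_edist_iff, ← h.coe_dist_eq_edist]
  norm_cast

namespace IsTwoPacking

variable {S : Set V} {x y z : V}

lemma not_adj (hS : G.IsTwoPacking S) (hx : x ∈ S) (hy : y ∈ S) : ¬G.Adj x y := fun h =>
  ((h.reachable.two_lt_dist_iff).1 (hS hx hy h.ne)).2.1 h

lemma eq_of_adj_of_adj (hS : G.IsTwoPacking S) (hx : x ∈ S) (hy : y ∈ S) (hxz : G.Adj x z)
    (hyz : G.Adj y z) : x = y := by
  by_contra hne
  have hxy := (hxz.reachable.trans hyz.reachable.symm).two_lt_dist_iff.1 (hS hx hy hne)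
  exact (Set.eq_empty_iff_forall_notMem.1 hxy.2.2 z) ⟨hxz, hyz⟩

end IsTwoPacking

lemma Preconnected.exists_adj_mem_notMem_sym2 [Fintype V] (h : G.Preconnected)
    (hV : 3 ≤ Fintype.card V) (u v : V) : ∃ t ∈ s(u, v), ∃ z ∉ s(u, v), G.Adj t z := by
  classical
  have hlt : ({u, v} : Finset V).card < (Finset.univ : Finset V).card :=
    Finset.card_le_two.trans_lt (by rw [Finset.card_univ]; omega)
  obtain ⟨y, -, hy⟩ := Finset.exists_mem_notMem_of_card_lt_card hlt
  obtain ⟨p⟩ := h u y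
  obtain ⟨d, -, hd₁, hd₂⟩ := p.exists_boundary_dart {t | t ∈ s(u, v)} (Sym2.mem_mk_left u v)
    (by simpa using hy)
  exact ⟨d.fst, hd₁, d.snd, hd₂, d.adj⟩

section Subdivision

variable {F : Finset (Sym2 V)}

@[simp]
lemma subdiv_adj_inl_inl {u v : V} :
    (G.subdiv F).Adj (.inl u) (.inl v) ↔ G.Adj u v ∧ s(u, v) ∉ F := by
  simp only [subdiv, fromRel_adj, ne_eq, Sum.inl.injEq, Sym2.eq_swap (a := v)]
  exact ⟨fun ⟨_, h⟩ => h.elim id fun h => ⟨h.1.symm, h.2⟩, fun h => ⟨h.1.ne, .inl h⟩⟩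

@[simp]
lemma subdiv_adj_inl_inr {u : V} {e : {e // e ∈ F}} :
    (G.subdiv F).Adj (.inl u) (.inr e) ↔ u ∈ (e : Sym2 V) := by
  simp [subdiv]

@[simp]
lemma subdiv_adj_inr_inl {u : V} {e : {e // e ∈ F}} :
    (G.subdiv F).Adj (.inr e) (.inl u) ↔ u ∈ (e : Sym2 V) := by
  simp [subdiv]

@[simp]
lemma not_subdiv_adj_inr_inr {e e' : {e // e ∈ F}} : ¬(G.subdiv F).Adj (.inr e) (.inr e') := by
  simp [subdiv]

lemma isDomSet_inl_image_subdiv {D : Set V} (hF : ∀ e ∈ F, ∃ x ∈ D, x ∈ e)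
    (hD : ∀ v ∉ D, ∃ u ∈ D, G.Adj u v ∧ s(u, v) ∉ F) :
    (G.subdiv F).IsDomSet (Sum.inl '' D) := by
  rintro (v | e) hv
  · obtain ⟨u, hu, huv⟩ := hD v fun h => hv ⟨v, h, rfl⟩
    exact ⟨.inl u, ⟨u, hu, rfl⟩, subdiv_adj_inl_inl.2 huv⟩
  · obtain ⟨x, hx, hxe⟩ := hF e e.2
    exact ⟨.inl x, ⟨x, hx, rfl⟩, subdiv_adj_inl_inr.2 hxe⟩

lemma isDomSet_image_subdiv (hF : ↑F ⊆ G.edgeSet) (f : {e // e ∈ F} → V)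
    (hf : ∀ e : {e // e ∈ F}, f e ∈ (e : Sym2 V)) {D : Set (V ⊕ {e // e ∈ F})}
    (hD : (G.subdiv F).IsDomSet D) : G.IsDomSet (Sum.elim id f '' D) := by
  intro v hv
  obtain ⟨x | e, ha, hadj⟩ := hD (.inl v) fun h => hv ⟨_, h, rfl⟩
  · exact ⟨x, ⟨_, ha, rfl⟩, (subdiv_adj_inl_inl.1 hadj).1⟩
  · have hfv : f e ≠ v := fun h => hv ⟨_, ha, h⟩
    have he : (e : Sym2 V) = s(f e, v) :=
      (Sym2.mem_and_mem_iff hfv).1 ⟨hf e, subdiv_adj_inr_inl.1 hadj⟩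
    exact ⟨f e, ⟨_, ha, rfl⟩, by rw [← mem_edgeSet, ← he]; exact hF e.2⟩

end Subdivision

section Domination

variable [Fintype V]

lemma domNum_le_card {D : Finset V} (hD : G.IsDomSet ↑D) : G.domNum ≤ D.card :=
  Nat.sInf_le ⟨D, rfl, hD⟩

lemma exists_isDomSet_card_eq_domNum (G : SimpleGraph V) :
    ∃ D : Finset V, G.IsDomSet ↑D ∧ D.card = G.domNum := by
  obtain ⟨D, hcard, hD⟩ := Nat.sInf_mem (s := {k | ∃ D : Finset V, D.card = k ∧ G.IsDomSet ↑D})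
    ⟨_, Finset.univ, rfl, fun v hv => (hv (Finset.mem_coe.2 (Finset.mem_univ v))).elim⟩
  exact ⟨D, hD, hcard⟩

variable {F : Finset (Sym2 V)}

lemma domNum_subdiv_le_card {D : Finset V} (hF : ∀ e ∈ F, ∃ x ∈ D, x ∈ e)
    (hD : ∀ v ∉ D, ∃ u ∈ D, G.Adj u v ∧ s(u, v) ∉ F) : (G.subdiv F).domNum ≤ D.card := by
  classical
  have h := isDomSet_inl_image_subdiv hF hD
  rw [← Finset.coe_image] at h
  exact (domNum_le_card h).trans Finset.card_image_le

lemma domNum_le_domNum_subdiv (hF : ↑F ⊆ G.edgeSet) : G.domNum ≤ (G.subdiv F).domNum := by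
  classical
  obtain ⟨D', hD', hcard⟩ := (G.subdiv F).exists_isDomSet_card_eq_domNum
  have hD := isDomSet_image_subdiv hF (fun e => e.1.out.1) (fun e => e.1.out_fst_mem) hD'
  rw [← Finset.coe_image] at hD
  exact (domNum_le_card hD).trans (Finset.card_image_le.trans hcard.le)

lemma domNum_subdiv_empty : (G.subdiv ∅).domNum = G.domNum := by
  obtain ⟨D, hD, hcard⟩ := G.exists_isDomSet_card_eq_domNum
  refine le_antisymm (hcard ▸ domNum_subdiv_le_card (by simp) fun v hv => ?_)
    (domNum_le_domNum_subdiv (by simp))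
  obtain ⟨u, hu, huv⟩ := hD v hv
  exact ⟨u, hu, huv, Finset.notMem_empty _⟩

lemma isTwoPacking_image_subdiv
    (hpack : ∀ D : Finset V, G.IsDomSet ↑D → D.card = G.domNum → G.IsTwoPacking ↑D)
    (hF : ↑F ⊆ G.edgeSet) (f : {e // e ∈ F} → V) (hf : ∀ e : {e // e ∈ F}, f e ∈ (e : Sym2 V))
    {D' : Finset (V ⊕ {e // e ∈ F})} (hD' : (G.subdiv F).IsDomSet ↑D')
    (hcard : D'.card ≤ G.domNum) : G.IsTwoPacking (Sum.elim id f '' ↑D') := by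
  classical
  have hD := isDomSet_image_subdiv hF f hf hD'
  rw [← Finset.coe_image] at hD ⊢
  exact hpack _ hD (le_antisymm (Finset.card_image_le.trans hcard) (domNum_le_card hD))

lemma isQCritical_one_iff : G.IsQCritical 1 ↔
    ∀ ⦃u v⦄, G.Adj u v → G.domNum < (G.subdiv {s(u, v)}).domNum := by
  refine ⟨fun h u v huv => h.1 _ (by simpa using huv) (Finset.card_singleton _),
    fun h => ⟨fun F hF hF1 => ?_, ∅, by simp, rfl, domNum_subdiv_empty⟩⟩
  obtain ⟨e, rfl⟩ := Finset.card_eq_one.1 hF1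
  induction e using Sym2.ind with
  | _ u v => exact h (hF (Finset.mem_singleton_self _))

variable {u v : V}

lemma isTwoPacking_of_forall_domNum_lt_subdiv (hconn : G.Connected)
    (hcrit : ∀ ⦃u v⦄, G.Adj u v → G.domNum < (G.subdiv {s(u, v)}).domNum) {D : Finset V}
    (hD : G.IsDomSet ↑D) (hDcard : D.card = G.domNum) : G.IsTwoPacking ↑D := by
  intro x hx y hy hxy
  -- `D` still dominates once an edge `xz` with `z` dominated by `y` is subdivided
  have no_short_path : ∀ z, G.Adj x z → z = y ∨ G.Adj y z → False := by
    intro z hxz hyz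
    refine (hcrit hxz).not_ge (hDcard ▸ domNum_subdiv_le_card ?_ fun v hv => ?_)
    · simp only [Finset.mem_singleton, forall_eq]
      exact ⟨x, hx, Sym2.mem_mk_left x z⟩
    by_cases hvz : v = z
    · subst hvz
      have hyv : G.Adj y v := hyz.resolve_left fun h => hv (h ▸ hy)
      refine ⟨y, hy, hyv, ?_⟩
      simp only [Finset.mem_singleton, Sym2.eq_iff]
      rintro (⟨rfl, -⟩ | ⟨rfl, -⟩)
      exacts [hxy rfl, hv hy]
    · obtain ⟨c, hc, hcv⟩ := hD v hv
      refine ⟨c, hc, hcv, ?_⟩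
      simp only [Finset.mem_singleton, Sym2.eq_iff]
      rintro (⟨-, rfl⟩ | ⟨-, rfl⟩)
      exacts [hvz rfl, hv hx]
  rw [(hconn x y).two_lt_dist_iff]
  exact ⟨hxy, fun h => no_short_path y h (.inl rfl),
    Set.eq_empty_of_forall_notMem fun z hz => no_short_path z hz.1 (.inr hz.2)⟩

lemma domNum_lt_domNum_subdiv_of_isTwoPacking (hconn : G.Connected) (hV : 3 ≤ Fintype.card V)
    (hpack : ∀ D : Finset V, G.IsDomSet ↑D → D.card = G.domNum → G.IsTwoPacking ↑D)
    (huv : G.Adj u v) : G.domNum < (G.subdiv {s(u, v)}).domNum := by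
  by_contra! hle
  set F : Finset (Sym2 V) := {s(u, v)}
  obtain ⟨D', hD', hD'card⟩ := (G.subdiv F).exists_isDomSet_card_eq_domNum
  have coe_eq : ∀ e : {e // e ∈ F}, (e : Sym2 V) = s(u, v) := fun e => Finset.mem_singleton.1 e.2
  set w : {e // e ∈ F} := ⟨s(u, v), Finset.mem_singleton_self _⟩
  have eq_w : ∀ e, e = w := fun e => Subtype.ext (coe_eq e)
  set P : V → Set V := fun t => Sum.elim id (fun _ : {e // e ∈ F} => t) '' ↑D'
  have hP : ∀ t ∈ s(u, v), G.IsTwoPacking (P t) := fun t ht =>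
    isTwoPacking_image_subdiv hpack (by simpa [F] using huv) _ (fun e => coe_eq e ▸ ht) hD'
      (hD'card ▸ hle)
  have inl_mem : ∀ {t x}, Sum.inl x ∈ D' → x ∈ P t := fun h => ⟨_, h, rfl⟩
  have inr_mem : ∀ {t}, Sum.inr w ∈ D' → t ∈ P t := fun h => ⟨_, h, rfl⟩
  by_cases hw : Sum.inr w ∈ D'
  · have hu : Sum.inl u ∉ D' := fun h =>
      (hP v (Sym2.mem_mk_right u v)).not_adj (inl_mem h) (inr_mem hw) huv
    have hv : Sum.inl v ∉ D' := fun h =>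
      (hP u (Sym2.mem_mk_left u v)).not_adj (inl_mem h) (inr_mem hw) huv.symm
    obtain ⟨t, ht, z, hz, htz⟩ := hconn.preconnected.exists_adj_mem_notMem_sym2 hV u v
    have htD : Sum.inl t ∉ D' := by rcases Sym2.mem_iff.1 ht with rfl | rfl <;> assumption
    have hzD : Sum.inl z ∉ D' := fun h => (hP t ht).not_adj (inr_mem hw) (inl_mem h) htz
    obtain ⟨x | e, ha, hadj⟩ := hD' _ hzD
    · have hxz := (subdiv_adj_inl_inl.1 hadj).1
      exact htD ((hP t ht).eq_of_adj_of_adj (inl_mem ha) (inr_mem hw) hxz htz ▸ ha)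
    · exact hz (coe_eq e ▸ subdiv_adj_inr_inl.1 hadj)
  · obtain ⟨t | e, ha, hadj⟩ := hD' _ hw
    · have ht : t ∈ s(u, v) := subdiv_adj_inl_inr.1 hadj
      set s := Sym2.Mem.other ht
      have hts : s(t, s) = s(u, v) := Sym2.other_spec ht
      have hts_adj : G.Adj t s := by rw [← mem_edgeSet, hts]; exact huv
      have hsD : Sum.inl s ∉ D' := fun h => (hP t ht).not_adj (inl_mem ha) (inl_mem h) hts_adj
      obtain ⟨x | e', ha', hadj'⟩ := hD' _ hsD
      · obtain ⟨hxs, hxs_ne⟩ := subdiv_adj_inl_inl.1 hadj'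
        obtain rfl := (hP t ht).eq_of_adj_of_adj (inl_mem ha') (inl_mem ha) hxs hts_adj
        exact hxs_ne (Finset.mem_singleton.2 hts)
      · exact hw (eq_w e' ▸ ha')
    · exact not_subdiv_adj_inr_inr hadj

end Domination

end SimpleGraph

theorem stmt6 {V : Type*} [Fintype V] (G : SimpleGraph V) (hconn : G.Connected)
    (hcard : 3 ≤ Fintype.card V) :
    G.IsQCritical 1 ↔
      ∀ D : Finset V, G.IsDomSet ↑D → D.card = G.domNum →
        ∀ x ∈ D, ∀ y ∈ D, x ≠ y → 2 < G.dist x y := by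
  rw [G.isQCritical_one_iff]
  exact ⟨fun hcrit _ => isTwoPacking_of_forall_domNum_lt_subdiv hconn hcrit,
    fun hpack _ _ => domNum_lt_domNum_subdiv_of_isTwoPacking hconn hcard hpack⟩
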